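/- Let (R_n)_{n≥0} be a cyclic urn process with m types started with one ball of type 0 and fix n ≥ 1. Let (R'_j)_{j≥0} and (R''_j)_{j≥0} be cyclic urn processes with m types started with one ball of type 0, and let I be a random variable uniformly distributed on {0, 1, …, n−1}, with I, (R'_j)_{j≥0}, (R''_j)_{j≥0} defined on a common probability space and mutually independent. Then the ℝ^m-valued random vector R'_I + Aᵗ R''_{n−1−I} has the same distribution as R_n. -/

import Mathlib

open MeasureTheory ProbabilityTheory Filter Complex Finset Topology

noncomputable section

/-- `ω = exp(2πi/m)`, the `m`-th elementary root of unity. -/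
def cw (m : ℕ) : ℂ := Complex.exp (2 * Real.pi * Complex.I / m)

/-- `λ_k = cos(2πk/m)`. -/
def lam (m k : ℕ) : ℝ := Real.cos (2 * Real.pi * k / m)

/-- `μ_k = sin(2πk/m)`. -/
def muim (m k : ℕ) : ℝ := Real.sin (2 * Real.pi * k / m)

/-- the eigenvector `v_k = (1/m)(1, ω^{-k}, …, ω^{-(m-1)k})`. -/
def vvec (m k : ℕ) : Fin m → ℂ :=
  fun t => (m : ℂ)⁻¹ * cw m ^ (-((k * (t : ℕ) : ℕ) : ℤ))

/-- the dual coefficient `u_k(w) = ∑_t ω^{kt} w_t`. -/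
def ucoef (m k : ℕ) (w : Fin m → ℝ) : ℂ :=
  ∑ t : Fin m, cw m ^ (k * (t : ℕ)) * (w t : ℂ)

/-- the replacement matrix `A` of the cyclic urn. -/
def repA (m : ℕ) : Matrix (Fin m) (Fin m) ℝ :=
  Matrix.of fun i j => if (j : ℕ) = ((i : ℕ) + 1) % m then 1 else 0

/-- the filtration `𝓕_n = σ(R_0, …, R_n)`. -/
def urnFilt {Ω : Type*} [MeasurableSpace Ω] (m : ℕ) (R : ℕ → Ω → Fin m → ℝ) (n : ℕ) :
    MeasurableSpace Ω :=
  ⨆ i ∈ Finset.range (n + 1), MeasurableSpace.comap (R i) inferInstance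

/-- A cyclic urn process with `m` types started with one ball of type `j0`. -/
structure IsCyclicUrn {Ω : Type*} [MeasurableSpace Ω] (μ : Measure Ω) (m : ℕ) (j0 : Fin m)
    (R : ℕ → Ω → Fin m → ℝ) : Prop where
  isProb : IsProbabilityMeasure μ
  meas : ∀ n, Measurable (R n)
  natVal : ∀ n ω i, ∃ z : ℕ, R n ω i = z
  init : ∀ ω, R 0 ω = fun i => if i = j0 then 1 else 0
  step : ∀ n, ∀ j : Fin m,
    μ[Set.indicator {ω | R (n + 1) ω =
        fun i => R n ω i + if (i : ℕ) = ((j : ℕ) + 1) % m then 1 else 0}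
      (fun _ => (1 : ℝ)) | urnFilt m R n]
      =ᵐ[μ] fun ω => R n ω j / (n + 1)

/-- componentwise expectation `E[X]` of a random vector. -/
def expVec {Ω : Type*} [MeasurableSpace Ω] (μ : Measure Ω) {m : ℕ}
    (X : Ω → Fin m → ℝ) : Fin m → ℝ := fun i => ∫ ω, X ω i ∂μ

/-- the martingale `M_{k,n} = (Γ(n+1)/Γ(n+1+ω^k)) u_k(R_n - E[R_n])`, with `M_{k,0} = 0`. -/
def Mart {Ω : Type*} [MeasurableSpace Ω] (μ : Measure Ω) (m k : ℕ)
    (R : ℕ → Ω → Fin m → ℝ) (n : ℕ) (ω : Ω) : ℂ :=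
  if n = 0 then 0
  else (Complex.Gamma ((n : ℂ) + 1) / Complex.Gamma ((n : ℂ) + 1 + cw m ^ k)) *
    ucoef m k (fun t => R n ω t - expVec μ (R n) t)

/-- `ν` is the centered Gaussian distribution `𝒩(0, S)` on `ℝ^d` (Cramér–Wold
characterization: every linear functional is one-dimensional centered Gaussian). -/
def IsCenteredGaussian {d : ℕ} (ν : Measure (Fin d → ℝ)) (S : Matrix (Fin d) (Fin d) ℝ) : Prop :=
  IsProbabilityMeasure ν ∧
  ∀ l : Fin d → ℝ,
    ν.map (fun x => ∑ i, l i * x i) =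
      gaussianReal 0 (Real.toNNReal (∑ i, ∑ j, l i * S i j * l j))

/-- convergence in distribution of the random vectors `X_n` to the law `ν`. -/
def TendstoInDist {Ω : Type*} [MeasurableSpace Ω] (μ : Measure Ω) {d : ℕ}
    (X : ℕ → Ω → Fin d → ℝ) (ν : Measure (Fin d → ℝ)) : Prop :=
  ∀ f : BoundedContinuousFunction (Fin d → ℝ) ℝ,
    Tendsto (fun n => ∫ ω, f (X n ω) ∂μ) atTop (𝓝 (∫ x, f x ∂ν))


/-!
Encode a law `∑ c_r δ_r` on `ℕ^m ⊆ ℝ^m` by the polynomial `∑ c_r X^r`. Products of polynomials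
become convolutions of laws, i.e. sums of independent vectors, and the cyclic shift
`σ : X_j ↦ X_{j+1}` becomes `v ↦ Aᵗ v`. The urn rule says that the polynomial `p_n` of the law
of `R_n` satisfies `(n + 1) p_{n+1} = D p_n` for the derivation `D = ∑_j X_{j+1} X_j ∂_j`, which
commutes with `σ`. As `D X_{j₀} = X_{j₀} σ(X_{j₀})`, the Leibniz rule shows that
`q_N = ∑_{i+k=N} p_i σ(p_k)` obeys the same recursion `(N + 1) q_{N+1} = D q_N` and has the same
initial value as `(N + 1) p_{N+1}`, so `n p_n = ∑_{i+k=n-1} p_i σ(p_k)`. Divided by `n`, the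
right-hand side is the law of `R'_I + Aᵗ R''_{n-1-I}`, by conditioning on the uniform index `I`.
-/

open scoped ENNReal Matrix
open MvPolynomial

lemma ENNReal.inv_natCast_add_one_smul_smul {M : Type*} [AddCommMonoid M] [Module ℝ≥0∞ M]
    (n : ℕ) (x : M) : ((n : ℝ≥0∞) + 1)⁻¹ • ((n : ℝ≥0∞) + 1) • x = x := by
  rw [smul_smul, ENNReal.inv_mul_cancel (by simp) (by simp), one_smul]

lemma measure_eq_sum_inter_of_ae_mem_iUnion {α ι : Type*} [MeasurableSpace α] [Fintype ι]
    {μ : Measure α} {E : ι → Set α} (hE : ∀ j, MeasurableSet (E j))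
    (hdisj : Pairwise (Function.onFun Disjoint E)) (hcover : ∀ᵐ x ∂μ, x ∈ ⋃ j, E j)
    {A : Set α} (hA : MeasurableSet A) : μ A = ∑ j, μ (A ∩ E j) := by
  rw [← measure_inter_conull (t := ⋃ j, E j) (ae_iff.mp hcover), Set.inter_iUnion,
    measure_iUnion (fun i j hij => Set.disjoint_of_subset Set.inter_subset_right
      Set.inter_subset_right (hdisj hij)) fun j => hA.inter (hE j), tsum_fintype]

section Independence

variable {Ω β γ δ : Type*} [MeasurableSpace Ω] [MeasurableSpace β] [MeasurableSpace γ]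
  [MeasurableSpace δ] {μ : Measure Ω}

lemma ProbabilityTheory.IndepFun.indepFun_prodMk_of_prodMk [IsProbabilityMeasure μ]
    {X : Ω → β} {Y : Ω → γ} {Z : Ω → δ} (hX : Measurable X) (hY : Measurable Y)
    (hZ : Measurable Z) (hXY : X ⟂ᵢ[μ] Y) (hXYZ : (fun ω => (X ω, Y ω)) ⟂ᵢ[μ] Z) :
    X ⟂ᵢ[μ] fun ω => (Y ω, Z ω) := by
  have hYZ : μ.map (fun ω => (Y ω, Z ω)) = (μ.map Y).prod (μ.map Z) :=
    (indepFun_iff_map_prod_eq_prod_map_map hY.aemeasurable hZ.aemeasurable).mp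
      (hXYZ.comp measurable_snd measurable_id)
  rw [indepFun_iff_map_prod_eq_prod_map_map hX.aemeasurable (hY.prodMk hZ).aemeasurable, hYZ,
    ← Measure.prodAssoc_prod,
    ← (indepFun_iff_map_prod_eq_prod_map_map hX.aemeasurable hY.aemeasurable).mp hXY,
    ← (indepFun_iff_map_prod_eq_prod_map_map (hX.prodMk hY).aemeasurable hZ.aemeasurable).mp hXYZ,
    Measure.map_map MeasurableEquiv.prodAssoc.measurable ((hX.prodMk hY).prodMk hZ)]
  rfl

lemma map_eq_sum_smul_map_of_indepFun {ι : Type*} [MeasurableSpace ι] [Countable ι]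
    [MeasurableSingletonClass ι] {I : Ω → ι} {W : Ω → β} (hI : Measurable I) (hW : Measurable W)
    (hIW : I ⟂ᵢ[μ] W) {F : Finset ι} (hF : ∀ ω, I ω ∈ F) {f : ι → β → γ}
    (hf : ∀ t, Measurable (f t)) :
    μ.map (fun ω => f (I ω) (W ω)) = ∑ t ∈ F, μ (I ⁻¹' {t}) • μ.map (fun ω => f t (W ω)) := by
  have hmeas : Measurable fun ω => f (I ω) (W ω) :=
    (measurable_from_prod_countable_left (f := fun p : β × ι => f p.2 p.1) hf).comp
      (hW.prodMk hI)
  ext s hs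
  have hpre : (fun ω => f (I ω) (W ω)) ⁻¹' s = ⋃ t ∈ F, I ⁻¹' {t} ∩ W ⁻¹' (f t ⁻¹' s) := by
    ext ω
    simp only [Set.mem_preimage, Set.mem_iUnion, Set.mem_inter_iff, Set.mem_singleton_iff,
      exists_prop]
    exact ⟨fun h => ⟨I ω, hF ω, rfl, h⟩, fun ⟨t, _, ht, h⟩ => ht ▸ h⟩
  rw [Measure.map_apply hmeas hs, hpre, measure_biUnion_finset, Measure.finsetSum_apply]
  · refine Finset.sum_congr rfl fun t _ => ?_
    rw [Measure.smul_apply, smul_eq_mul,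
      Measure.map_apply (show Measurable fun ω => f t (W ω) from (hf t).comp hW) hs]
    exact hIW.measure_inter_preimage_eq_mul _ _ (measurableSet_singleton t) (hf t hs)
  · intro t _ t' _ htt'
    exact Set.disjoint_of_subset Set.inter_subset_left Set.inter_subset_left
      (Set.disjoint_singleton.mpr htt' |>.preimage I)
  · exact fun t _ => hI (measurableSet_singleton t) |>.inter (hW (hf t hs))

end Independence

section UrnPolynomial

variable {m : ℕ} [NeZero m]

def urnDerivation (m : ℕ) [NeZero m] :
    Derivation ℝ≥0∞ (MvPolynomial (Fin m) ℝ≥0∞) (MvPolynomial (Fin m) ℝ≥0∞) :=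
  ∑ j : Fin m, (X (j + 1) * X j : MvPolynomial (Fin m) ℝ≥0∞) • pderiv j

lemma urnDerivation_apply (p : MvPolynomial (Fin m) ℝ≥0∞) :
    urnDerivation m p = ∑ j, X (j + 1) * (X j * pderiv j p) := by
  rw [urnDerivation, ← Derivation.coeFnAddMonoidHom_apply, map_sum, Finset.sum_apply]
  simp [Derivation.coeFnAddMonoidHom_apply, Derivation.smul_apply, mul_assoc]

lemma urnDerivation_X (i : Fin m) : urnDerivation m (X i) = X (i + 1) * X i := by
  classical
  simp [urnDerivation_apply, pderiv_X, Pi.single_apply]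

lemma urnDerivation_rename_add_one (p : MvPolynomial (Fin m) ℝ≥0∞) :
    urnDerivation m (rename (· + 1) p) = rename (· + 1) (urnDerivation m p) := by
  induction p using MvPolynomial.induction_on with
  | C a => simp
  | add p q hp hq => simp only [map_add, hp, hq]
  | mul_X p i hp =>
    simp only [map_mul, map_add, Derivation.leibniz, smul_eq_mul, hp, rename_X, urnDerivation_X]

def urnPoly (j₀ : Fin m) : ℕ → MvPolynomial (Fin m) ℝ≥0∞
  | 0 => X j₀
  | n + 1 => ((n : ℝ≥0∞) + 1)⁻¹ • urnDerivation m (urnPoly j₀ n)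

variable {j₀ : Fin m}

lemma urnDerivation_urnPoly (n : ℕ) :
    urnDerivation m (urnPoly j₀ n) = ((n : ℝ≥0∞) + 1) • urnPoly j₀ (n + 1) := by
  rw [urnPoly, smul_smul, ENNReal.mul_inv_cancel (by simp) (by simp), one_smul]

lemma urnDerivation_sum_antidiagonal (N : ℕ) :
    urnDerivation m (∑ x ∈ antidiagonal N, urnPoly j₀ x.1 * rename (· + 1) (urnPoly j₀ x.2)) =
      ((N : ℝ≥0∞) + 1) •
        ∑ x ∈ antidiagonal (N + 1), urnPoly j₀ x.1 * rename (· + 1) (urnPoly j₀ x.2) := by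
  set f : ℕ × ℕ → MvPolynomial (Fin m) ℝ≥0∞ :=
    fun x => urnPoly j₀ x.1 * rename (· + 1) (urnPoly j₀ x.2)
  have hsplit : ((N : ℝ≥0∞) + 1) • ∑ x ∈ antidiagonal (N + 1), f x =
      ∑ x ∈ antidiagonal (N + 1), (x.1 : ℝ≥0∞) • f x +
        ∑ x ∈ antidiagonal (N + 1), (x.2 : ℝ≥0∞) • f x := by
    rw [Finset.smul_sum, ← Finset.sum_add_distrib]
    refine Finset.sum_congr rfl fun x hx => ?_
    rw [← add_smul, ← Nat.cast_add, mem_antidiagonal.mp hx, Nat.cast_succ]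
  rw [hsplit, Finset.Nat.sum_antidiagonal_succ, Finset.Nat.sum_antidiagonal_succ', map_sum]
  simp only [f, Nat.cast_zero, zero_smul, zero_add, ← Finset.sum_add_distrib, Derivation.leibniz,
    urnDerivation_rename_add_one, urnDerivation_urnPoly, map_smul, smul_eq_mul, Nat.cast_succ,
    mul_smul_comm]
  refine Finset.sum_congr rfl fun x _ => ?_
  rw [add_comm, mul_comm (rename _ _)]

lemma smul_urnPoly_succ_eq_sum_antidiagonal (N : ℕ) :
    ((N : ℝ≥0∞) + 1) • urnPoly j₀ (N + 1) =
      ∑ x ∈ antidiagonal N, urnPoly j₀ x.1 * rename (· + 1) (urnPoly j₀ x.2) := by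
  induction N with
  | zero => simp [urnPoly, urnDerivation_X, mul_comm]
  | succ N ih =>
    rw [← ENNReal.inv_natCast_add_one_smul_smul N (∑ x ∈ antidiagonal (N + 1), _),
      ← urnDerivation_sum_antidiagonal, ← ih, Derivation.map_smul,
      ENNReal.inv_natCast_add_one_smul_smul, urnDerivation_urnPoly, Nat.cast_succ]

end UrnPolynomial

section PolyLaw

variable {m : ℕ}

def polyLaw (m : ℕ) : MvPolynomial (Fin m) ℝ≥0∞ →ₗ[ℝ≥0∞] Measure (Fin m → ℝ) :=
  Finsupp.linearCombination ℝ≥0∞ (fun r : Fin m →₀ ℕ => Measure.dirac fun i => (r i : ℝ)) ∘ₗ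
    (AddMonoidAlgebra.coeffLinearEquiv ℝ≥0∞).toLinearMap

lemma polyLaw_monomial (r : Fin m →₀ ℕ) (c : ℝ≥0∞) :
    polyLaw m (monomial r c) = c • Measure.dirac fun i => (r i : ℝ) :=
  Finsupp.linearCombination_single ℝ≥0∞ c r

lemma polyLaw_X (k : Fin m) : polyLaw m (X k) = Measure.dirac (Pi.single k 1) := by
  classical
  rw [X, polyLaw_monomial, one_smul]
  congr 1
  ext i
  simp [Finsupp.single_apply, Pi.single_apply, eq_comm]

instance (p : MvPolynomial (Fin m) ℝ≥0∞) : SFinite (polyLaw m p) := by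
  induction p using MvPolynomial.induction_on' with
  | monomial r c => rw [polyLaw_monomial]; infer_instance
  | add p q hp hq => rw [map_add]; infer_instance

lemma polyLaw_mul (p q : MvPolynomial (Fin m) ℝ≥0∞) :
    polyLaw m (p * q) = polyLaw m p ∗ polyLaw m q := by
  induction p using MvPolynomial.induction_on' with
  | add p p' hp hp' => rw [add_mul, map_add, map_add, hp, hp', Measure.add_conv]
  | monomial r c =>
    induction q using MvPolynomial.induction_on' with
    | add q q' hq hq' => rw [mul_add, map_add, map_add, hq, hq', Measure.conv_add]
    | monomial s d =>
      rw [monomial_mul, polyLaw_monomial, polyLaw_monomial, polyLaw_monomial,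
        Measure.conv_smul_left, Measure.conv_smul_right, Measure.dirac_conv_dirac, smul_smul]
      congr 2
      ext i
      simp

lemma polyLaw_X_mul (k : Fin m) (p : MvPolynomial (Fin m) ℝ≥0∞) :
    polyLaw m (X k * p) = (polyLaw m p).map (Pi.single k 1 + ·) := by
  rw [polyLaw_mul, polyLaw_X, Measure.dirac_conv]

lemma polyLaw_X_mul_pderiv (j : Fin m) (p : MvPolynomial (Fin m) ℝ≥0∞) :
    polyLaw m (X j * pderiv j p) = (polyLaw m p).withDensity fun v => ENNReal.ofReal (v j) := by
  induction p using MvPolynomial.induction_on' with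
  | add p q hp hq => rw [map_add, mul_add, map_add, map_add, hp, hq, withDensity_add_measure]
  | monomial r c =>
    rw [X_mul_pderiv_monomial, map_nsmul, polyLaw_monomial, withDensity_smul_measure,
      dirac_withDensity, ENNReal.ofReal_natCast, ← Nat.cast_smul_eq_nsmul ℝ≥0∞, smul_comm]

variable [NeZero m]

lemma repA_row (i : Fin m) : repA m i = Pi.single (i + 1) 1 := by
  ext k
  simp [repA, Pi.single_apply, Fin.ext_iff, Fin.val_add]

lemma transpose_repA_mulVec (v : Fin m → ℝ) : (repA m)ᵀ *ᵥ v = fun i => v (i - 1) := by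
  ext i
  have hi : ∀ k : Fin m, i = k + 1 ↔ k = i - 1 := fun k => by rw [eq_sub_iff_add_eq, eq_comm]
  simp [Matrix.mulVec, dotProduct, Matrix.transpose_apply, repA_row, Pi.single_apply, hi]

lemma polyLaw_rename_add_one (p : MvPolynomial (Fin m) ℝ≥0∞) :
    polyLaw m (rename (· + 1) p) = (polyLaw m p).map ((repA m)ᵀ *ᵥ ·) := by
  induction p using MvPolynomial.induction_on' with
  | add p q hp hq =>
    simp only [map_add, hp, hq]
    rw [Measure.map_add _ _ (by fun_prop)]
  | monomial r c =>
    rw [rename_monomial, polyLaw_monomial, polyLaw_monomial, Measure.map_smul,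
      Measure.map_dirac, transpose_repA_mulVec]
    congr 2
    ext i
    conv_lhs => rw [← sub_add_cancel i 1]
    rw [Finsupp.mapDomain_apply (add_left_injective 1)]

lemma polyLaw_urnDerivation (p : MvPolynomial (Fin m) ℝ≥0∞) :
    polyLaw m (urnDerivation m p) = ∑ j, ((polyLaw m p).withDensity
      fun v => ENNReal.ofReal (v j)).map (Pi.single (j + 1) 1 + ·) := by
  rw [urnDerivation_apply, map_sum]
  exact Finset.sum_congr rfl fun j _ => by rw [polyLaw_X_mul, polyLaw_X_mul_pderiv]

end PolyLaw

section Urn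

variable {Ω : Type*} {m : ℕ}

def drawSet [NeZero m] (R : ℕ → Ω → Fin m → ℝ) (n : ℕ) (j : Fin m) : Set Ω :=
  {ω | R (n + 1) ω = R n ω + Pi.single (j + 1) 1}

lemma pairwise_disjoint_drawSet [NeZero m] (R : ℕ → Ω → Fin m → ℝ) (n : ℕ) :
    Pairwise (Function.onFun Disjoint (drawSet R n)) := by
  intro j k hjk
  refine Set.disjoint_left.mpr fun ω hj hk => hjk ?_
  have hsingle := add_left_cancel ((hj : R (n + 1) ω = _).symm.trans hk)
  simpa [Pi.single_apply] using congrFun hsingle (j + 1)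

variable [MeasurableSpace Ω] {μ : Measure Ω} {j₀ : Fin m} {R : ℕ → Ω → Fin m → ℝ}

lemma IsCyclicUrn.nonneg (hR : IsCyclicUrn μ m j₀ R) (n : ℕ) (ω : Ω) (i : Fin m) :
    0 ≤ R n ω i := by
  obtain ⟨z, hz⟩ := hR.natVal n ω i
  exact hz ▸ z.cast_nonneg

variable [NeZero m]

lemma IsCyclicUrn.measurableSet_drawSet (hR : IsCyclicUrn μ m j₀ R) (n : ℕ) (j : Fin m) :
    MeasurableSet (drawSet R n j) :=
  measurableSet_eq_fun (hR.meas (n + 1)) ((hR.meas n).add_const _)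

lemma IsCyclicUrn.measure_drawSet_inter_preimage (hR : IsCyclicUrn μ m j₀ R) (n : ℕ) (j : Fin m)
    {T : Set (Fin m → ℝ)} (hT : MeasurableSet T) :
    μ (drawSet R n j ∩ R n ⁻¹' T) =
      ((n : ℝ≥0∞) + 1)⁻¹ * ∫⁻ ω in R n ⁻¹' T, ENNReal.ofReal (R n ω j) ∂μ := by
  have := hR.isProb
  have hF : urnFilt m R n ≤ ‹MeasurableSpace Ω› := iSup₂_le fun i _ => (hR.meas i).comap_le
  have hA : MeasurableSet[urnFilt m R n] (R n ⁻¹' T) :=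
    le_iSup₂ (f := fun i (_ : i ∈ Finset.range (n + 1)) =>
      MeasurableSpace.comap (R i) inferInstance)
      n (Finset.self_mem_range_succ n) _ ⟨T, hT, rfl⟩
  have hE := hR.measurableSet_drawSet n j
  have hstep : μ[(drawSet R n j).indicator fun _ => (1 : ℝ) | urnFilt m R n] =ᵐ[μ]
      fun ω => R n ω j / (n + 1) := by
    have h := hR.step n j
    -- the increment in `step` is, definitionally, the row `j` of `repA m`
    change μ[{ω | R (n + 1) ω = R n ω + repA m j}.indicator _ | _] =ᵐ[μ] _ at h
    rwa [repA_row] at h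
  have hint : Integrable (fun ω => R n ω j / (n + 1)) μ := integrable_condExp.congr hstep
  have hreal : μ.real (drawSet R n j ∩ R n ⁻¹' T) = ∫ ω in R n ⁻¹' T, R n ω j / (n + 1) ∂μ := by
    rw [← setIntegral_congr_ae (hR.meas n hT) (hstep.mono fun ω hω _ => hω),
      setIntegral_condExp hF ((integrable_const 1).indicator hE) hA, setIntegral_indicator hE,
      setIntegral_const, smul_eq_mul, mul_one, Set.inter_comm]
  rw [← ofReal_measureReal, hreal, ofReal_integral_eq_lintegral_ofReal hint.integrableOn
    (Eventually.of_forall fun ω => by positivity [hR.nonneg n ω j]),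
    ← lintegral_const_mul' _ _ (by simp)]
  refine lintegral_congr fun ω => ?_
  rw [ENNReal.ofReal_div_of_pos (by positivity), div_eq_mul_inv, mul_comm]
  norm_cast

lemma IsCyclicUrn.ae_mem_iUnion_drawSet_of_ae_sum (hR : IsCyclicUrn μ m j₀ R) (n : ℕ)
    (hsum : ∀ᵐ ω ∂μ, ∑ i, R n ω i = n + 1) : ∀ᵐ ω ∂μ, ω ∈ ⋃ j, drawSet R n j := by
  have := hR.isProb
  have hmeas := hR.measurableSet_drawSet n
  have hU : μ (⋃ j, drawSet R n j) = 1 := by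
    have h1 : ∀ j, μ (drawSet R n j) = ((n : ℝ≥0∞) + 1)⁻¹ * ∫⁻ ω, ENNReal.ofReal (R n ω j) ∂μ :=
      fun j => by simpa using hR.measure_drawSet_inter_preimage n j MeasurableSet.univ
    have h2 : ∫⁻ ω, ∑ j, ENNReal.ofReal (R n ω j) ∂μ = (n : ℝ≥0∞) + 1 := by
      rw [lintegral_congr_ae (hsum.mono fun ω hω => by
        rw [← ENNReal.ofReal_sum_of_nonneg fun i _ => hR.nonneg n ω i, hω]), lintegral_const,
        measure_univ, mul_one]
      norm_cast
    have hRn := hR.meas n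
    rw [measure_iUnion (pairwise_disjoint_drawSet R n) hmeas, tsum_fintype]
    simp_rw [h1, ← Finset.mul_sum]
    rw [← lintegral_finsetSum _ fun j _ => by fun_prop, h2,
      ENNReal.inv_mul_cancel (by simp) (by simp)]
  exact ae_iff.mpr ((prob_compl_eq_zero_iff (MeasurableSet.iUnion hmeas)).mpr hU)

lemma IsCyclicUrn.ae_sum_eq (hR : IsCyclicUrn μ m j₀ R) :
    ∀ n, ∀ᵐ ω ∂μ, ∑ i, R n ω i = n + 1
  | 0 => Eventually.of_forall fun ω => by simp [hR.init]
  | n + 1 => by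
    have hsum := hR.ae_sum_eq n
    filter_upwards [hsum, hR.ae_mem_iUnion_drawSet_of_ae_sum n hsum] with ω hω hU
    obtain ⟨j, hj⟩ := Set.mem_iUnion.mp hU
    simp [show R (n + 1) ω = _ from hj, Finset.sum_add_distrib, hω]

lemma IsCyclicUrn.map_succ (hR : IsCyclicUrn μ m j₀ R) (n : ℕ) :
    μ.map (R (n + 1)) = ((n : ℝ≥0∞) + 1)⁻¹ • ∑ j, ((μ.map (R n)).withDensity
      fun v => ENNReal.ofReal (v j)).map (Pi.single (j + 1) 1 + ·) := by
  ext s hs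
  have hT : ∀ j : Fin m, MeasurableSet ((Pi.single (j + 1) 1 + ·) ⁻¹' s : Set (Fin m → ℝ)) :=
    fun j => measurable_const_add _ hs
  have hpre : ∀ j, R (n + 1) ⁻¹' s ∩ drawSet R n j =
      drawSet R n j ∩ R n ⁻¹' ((Pi.single (j + 1) 1 + ·) ⁻¹' s) := by
    intro j
    ext ω
    simp only [Set.mem_inter_iff, Set.mem_preimage]
    constructor
    · rintro ⟨h, hj⟩
      exact ⟨hj, by rwa [add_comm, ← show R (n + 1) ω = _ from hj]⟩
    · rintro ⟨hj, h⟩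
      exact ⟨by rwa [show R (n + 1) ω = _ from hj, add_comm], hj⟩
  rw [Measure.map_apply (hR.meas _) hs,
    measure_eq_sum_inter_of_ae_mem_iUnion (hR.measurableSet_drawSet n)
      (pairwise_disjoint_drawSet R n)
      (hR.ae_mem_iUnion_drawSet_of_ae_sum n (hR.ae_sum_eq n)) (hR.meas _ hs),
    Measure.smul_apply, Measure.finsetSum_apply, smul_eq_mul, Finset.mul_sum]
  refine Finset.sum_congr rfl fun j _ => ?_
  rw [hpre, hR.measure_drawSet_inter_preimage n j (hT j),
    Measure.map_apply (measurable_const_add _) hs,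
    withDensity_apply _ (hT j), setLIntegral_map (hT j)
      ((measurable_pi_apply j).ennreal_ofReal) (hR.meas n)]

lemma IsCyclicUrn.map_eq_polyLaw (hR : IsCyclicUrn μ m j₀ R) :
    ∀ n, μ.map (R n) = polyLaw m (urnPoly j₀ n)
  | 0 => by
    have := hR.isProb
    have h0 : R 0 = fun _ => Pi.single j₀ 1 := by
      ext ω i
      simp [hR.init, Pi.single_apply]
    rw [h0, Measure.map_const, measure_univ, one_smul, urnPoly, polyLaw_X]
  | n + 1 => by
    rw [hR.map_succ, hR.map_eq_polyLaw n, urnPoly, map_smul, polyLaw_urnDerivation]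

lemma IsCyclicUrn.map_add_mulVec_eq_polyLaw {R' : ℕ → Ω → Fin m → ℝ} (hR : IsCyclicUrn μ m j₀ R)
    (hR' : IsCyclicUrn μ m j₀ R') {t s : ℕ} (hind : R t ⟂ᵢ[μ] R' s) :
    μ.map (fun ω => R t ω + (repA m)ᵀ *ᵥ R' s ω) =
      polyLaw m (urnPoly j₀ t * rename (· + 1) (urnPoly j₀ s)) := by
  have := hR.isProb
  have hmulVec : Measurable ((repA m)ᵀ *ᵥ ·) := by fun_prop
  rw [show (fun ω => R t ω + (repA m)ᵀ *ᵥ R' s ω) = R t + ((repA m)ᵀ *ᵥ ·) ∘ R' s from rfl,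
    (hind.comp measurable_id hmulVec).map_add_eq_map_conv_map (hR.meas t)
      (hmulVec.comp (hR'.meas s)),
    polyLaw_mul, polyLaw_rename_add_one, ← hR.map_eq_polyLaw, ← hR'.map_eq_polyLaw,
    Measure.map_map hmulVec (hR'.meas s)]

end Urn

theorem stmt15 {Ω Ω₂ : Type*} [MeasurableSpace Ω] [MeasurableSpace Ω₂]
    (μ : Measure Ω) (ν : Measure Ω₂) (m : ℕ) (hm : 2 ≤ m)
    (R : ℕ → Ω → Fin m → ℝ) (hR : IsCyclicUrn μ m ⟨0, by omega⟩ R)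
    (n : ℕ) (hn : 1 ≤ n)
    (R' R'' : ℕ → Ω₂ → Fin m → ℝ) (I : Ω₂ → ℕ)
    (hR' : IsCyclicUrn ν m ⟨0, by omega⟩ R') (hR'' : IsCyclicUrn ν m ⟨0, by omega⟩ R'')
    (hI : Measurable I) (hIlt : ∀ ω, I ω < n)
    (hIunif : ∀ j : ℕ, j < n → ν (I ⁻¹' {j}) = (n : ENNReal)⁻¹)
    (hind1 : IndepFun I (fun ω j => R' j ω) ν)
    (hind2 : IndepFun (fun ω => (I ω, fun j => R' j ω)) (fun ω j => R'' j ω) ν) :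
    ν.map (fun ω => fun i =>
        R' (I ω) ω i + (repA m).transpose.mulVec (R'' (n - 1 - I ω) ω) i) =
      μ.map (R n) := by
  have : NeZero m := ⟨by omega⟩
  have := hR'.isProb
  obtain ⟨N, rfl⟩ : ∃ N, n = N + 1 := ⟨n - 1, by omega⟩
  set p := urnPoly (⟨0, by omega⟩ : Fin m)
  have hY : Measurable fun ω j => R' j ω := measurable_pi_lambda _ hR'.meas
  have hZ : Measurable fun ω j => R'' j ω := measurable_pi_lambda _ hR''.meas
  calc _ = ∑ t ∈ range (N + 1), ν (I ⁻¹' {t}) •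
        ν.map (fun ω => R' t ω + (repA m)ᵀ *ᵥ R'' (N - t) ω) :=
        map_eq_sum_smul_map_of_indepFun (f := fun t y => y.1 t + (repA m)ᵀ *ᵥ y.2 (N - t))
          hI (hY.prodMk hZ) (hind1.indepFun_prodMk_of_prodMk hI hY hZ hind2)
          (fun ω => mem_range.mpr (hIlt ω)) (fun t => by fun_prop)
    _ = polyLaw m (((N : ℝ≥0∞) + 1)⁻¹ •
          ∑ x ∈ antidiagonal N, p x.1 * rename (· + 1) (p x.2)) := by
      rw [Finset.Nat.sum_antidiagonal_eq_sum_range_succ_mk, smul_sum, map_sum]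
      refine sum_congr rfl fun t ht => ?_
      rw [hIunif t (mem_range.mp ht), map_smul, Nat.cast_succ,
        hR'.map_add_mulVec_eq_polyLaw hR'' (t := t) (s := N - t)
          (hind2.comp (φ := fun x : ℕ × (ℕ → Fin m → ℝ) => x.2 t)
            (ψ := fun z : ℕ → Fin m → ℝ => z (N - t)) (by fun_prop) (by fun_prop))]
    _ = μ.map (R (N + 1)) := by
      rw [← smul_urnPoly_succ_eq_sum_antidiagonal, ENNReal.inv_natCast_add_one_smul_smul,
        hR.map_eq_polyLaw]

end
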